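/- Let p ≥ 0, let e ∈ Fin(p+1), and let F be a nonempty finite set of subsets of Fin(p+1) each of which contains e. Then the inclusion of the subcomplex ⨆_{T ∈ F} Face(T) into Δ[p] has the left lifting property with respect to all Kan fibrations. -/

import Mathlib

/-!
Let `U` be the union of the faces in `F`. Enlarge `U` by the faces through `e` that it does not
yet contain, always adding one of smallest size. If `T ∋ e` is such a face, each facet
`T \ {j}` with `j ≠ e` is already contained in `U`, while every face of `U` contains `e`; hence
`U ∩ face T` is exactly the horn of `face T ≅ Δ[|T| - 1]` at the vertex `e`, and `U ⟶ U ∪ face T`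
is a pushout of a horn inclusion. Once every face through `e` is contained in `U`, so is the
top face, so `U ⟶ Δ[p]` is a finite composite of anodyne extensions, which lift against Kan
fibrations.
-/

open CategoryTheory Simplicial CategoryTheory.GrothendieckTopology

universe u

/-- A morphism of simplicial sets is a *Kan fibration* if it has the right lifting
property with respect to every horn inclusion `Λ[n, i] ⟶ Δ[n]` with `n ≥ 1`. -/
def IsKanFibration {X Y : SSet} (f : X ⟶ Y) : Prop :=
  ∀ ⦃n : ℕ⦄ (i : Fin (n + 2)), HasLiftingProperty (SSet.horn (n + 1) i).ι f

namespace CategoryTheory.GrothendieckTopology.Subpresheaf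

variable {C : Type*} [Category C] {F : Cᵒᵖ ⥤ Type u}

instance : InfSet (Subfunctor F) where
  sInf S :=
    { obj := fun U => ⋂ G ∈ S, Subfunctor.obj G U
      map := by
        intro U V i x hx
        simp only [Set.mem_iInter, Set.mem_preimage] at hx ⊢
        intro G hG
        exact G.map i (hx G hG) }

theorem sInf_obj (S : Set (Subfunctor F)) (U : Cᵒᵖ) :
    (sInf S).obj U = ⋂ G ∈ S, Subfunctor.obj G U := rfl

/-- Subpresheaves of a presheaf of types form a complete lattice under objectwise
inclusion, with intersections (and hence unions) computed objectwise. -/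
noncomputable instance : CompleteLattice (Subfunctor F) :=
  completeLatticeOfInf _ (fun S =>
    ⟨fun G hG U x hx => by
        rw [sInf_obj] at hx
        exact Set.mem_iInter₂.1 hx G hG,
     fun G hG U x hx => by
        rw [sInf_obj]
        exact Set.mem_iInter₂.2 fun H hH => hG hH U hx⟩)

end CategoryTheory.GrothendieckTopology.Subpresheaf

namespace CategoryTheory.GrothendieckTopology

/-- A subpresheaf of a simplicial set, regarded as a simplicial set. -/
def Subpresheaf.sset {F : SSet} (G : Subfunctor F) : SSet := G.toFunctor

/-- The inclusion morphism of a subpresheaf of a simplicial set. -/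
def Subpresheaf.ssetι {F : SSet} (G : Subfunctor F) : Subpresheaf.sset G ⟶ F := G.ι

/-- The inclusion morphism between two nested subpresheaves of a simplicial set. -/
def Subpresheaf.ssetHomOfLe {F : SSet} {G G' : Subfunctor F} (h : G ≤ G') :
    Subpresheaf.sset G ⟶ Subpresheaf.sset G' := Subfunctor.homOfLe h

end CategoryTheory.GrothendieckTopology

/-- `SSet.face p S` is the face of the standard simplex `Δ[p]` spanned by the set of
vertices `S ⊆ Fin (p+1)` : the subpresheaf whose simplices are the monotone maps with
image (range) contained in `S`. -/
def SSet.face (p : ℕ) (S : Set (Fin (p + 1))) : Subfunctor (Δ[p] : SSet) where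
  obj m := { α | Set.range (SSet.stdSimplex.asOrderHom α) ⊆ S }
  map := by
    intro U V i x hx y hy
    apply hx
    obtain ⟨z, rfl⟩ := hy
    exact ⟨i.unop.toOrderHom z, rfl⟩

section

-- The complete lattice structure on `Subfunctor F` declared above has a `⊔` that is not
-- definitionally Mathlib's; Mathlib's lattice lemmas on subcomplexes need Mathlib's instance.
attribute [local instance high] CategoryTheory.instCompleteLatticeSubfunctor

namespace SSet

variable {X Y : SSet.{u}}

lemma anodyneExtensions.hasLiftingProperty {Z W : SSet.{u}} {i : X ⟶ Y}
    (hi : anodyneExtensions i) {g : Z ⟶ W} (hg : IsKanFibration g) : HasLiftingProperty i g := by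
  rw [anodyneExtensions_eq_llp_rlp] at hi
  refine hi g fun _ _ j hj => ?_
  simp only [modelCategoryQuillen.J, MorphismProperty.iSup_iff] at hj
  obtain ⟨n, ⟨k⟩⟩ := hj
  exact hg k

namespace Subcomplex

instance isIso_toImage (f : X ⟶ Y) [Mono f] (A : X.Subcomplex) : IsIso (A.toImage f) :=
  have : Mono (A.toImage f) := mono_of_mono_fac (A.toImage_ι f)
  isIso_of_mono_of_epi _

lemma preimage_le_preimage (f : X ⟶ Y) {A B : Y.Subcomplex} (h : A ≤ B) :
    A.preimage f ≤ B.preimage f :=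
  fun _ _ hx => h _ hx

lemma image_preimage_of_le_range (f : X ⟶ Y) {A : Y.Subcomplex} (hA : A ≤ range f) :
    (A.preimage f).image f = A := by
  refine le_antisymm (image_preimage_le A f) fun n y hy => ?_
  obtain ⟨x, rfl⟩ := hA n hy
  exact ⟨x, hy, rfl⟩

end Subcomplex

lemma anodyneExtensions_homOfLE_of_eq {A B A' B' : X.Subcomplex} (h : A ≤ B) (h' : A' ≤ B')
    (hA : A = A') (hB : B = B') (hAB : anodyneExtensions (Subcomplex.homOfLE h)) :
    anodyneExtensions (Subcomplex.homOfLE h') := by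
  subst hA hB
  exact hAB

lemma anodyneExtensions_homOfLE_top_iff (A : X.Subcomplex) :
    anodyneExtensions (Subcomplex.homOfLE (le_top : A ≤ ⊤)) ↔ anodyneExtensions A.ι := by
  have : IsIso (⊤ : X.Subcomplex).ι := by
    rw [← Subcomplex.topIso_hom]
    infer_instance
  exact (MorphismProperty.cancel_right_of_respectsIso _ _ (⊤ : X.Subcomplex).ι).symm

lemma anodyneExtensions_homOfLE_image (f : X ⟶ Y) [Mono f] {A B : X.Subcomplex} (h : A ≤ B)
    (hAB : anodyneExtensions (Subcomplex.homOfLE h)) :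
    anodyneExtensions (Subcomplex.homOfLE (Subcomplex.image_monotone f h)) := by
  have e : Arrow.mk (Subcomplex.homOfLE h) ≅
      Arrow.mk (Subcomplex.homOfLE (Subcomplex.image_monotone f h)) :=
    Arrow.isoMk (asIso (A.toImage f)) (asIso (B.toImage f)) rfl
  exact (anodyneExtensions.arrow_mk_iso_iff e).1 hAB

lemma anodyneExtensions_homOfLE_of_preimage (f : X ⟶ Y) [Mono f] {A B : Y.Subcomplex}
    (h : A ≤ B) (hB : B ≤ Subcomplex.range f)
    (hAB : anodyneExtensions (Subcomplex.homOfLE (Subcomplex.preimage_le_preimage f h))) :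
    anodyneExtensions (Subcomplex.homOfLE h) :=
  anodyneExtensions_homOfLE_of_eq _ h
    (Subcomplex.image_preimage_of_le_range f (h.trans hB))
    (Subcomplex.image_preimage_of_le_range f hB) (anodyneExtensions_homOfLE_image f _ hAB)

lemma anodyneExtensions_homOfLE_sup {A B : X.Subcomplex}
    (h : anodyneExtensions (Subcomplex.homOfLE (inf_le_right : A ⊓ B ≤ B))) :
    anodyneExtensions (Subcomplex.homOfLE (le_sup_left : A ≤ A ⊔ B)) :=
  MorphismProperty.of_isPushout (Subcomplex.BicartSq.isPushout ⟨rfl, rfl⟩) h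

namespace stdSimplex

variable {p : ℕ}

def faceHorn (T : Finset (Fin (p + 1))) (e : Fin (p + 1)) : (Δ[p] : SSet.{u}).Subcomplex :=
  ⨆ j ∈ T.erase e, face (T.erase j)

lemma faceHorn_le_face (T : Finset (Fin (p + 1))) (e : Fin (p + 1)) :
    faceHorn.{u} T e ≤ face T :=
  iSup₂_le fun _ _ => (face_le_face_iff _ _).2 (Finset.erase_subset _ _)

def faceMap (T : Finset (Fin (p + 1))) {n : ℕ} (σ : Fin (n + 1) ≃o T) : Δ[n] ⟶ Δ[p] :=
  (isoOfRepresentableBy (faceRepresentableBy.{u} T n σ)).hom ≫ (face T).ι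

instance (T : Finset (Fin (p + 1))) {n : ℕ} (σ : Fin (n + 1) ≃o T) :
    Mono (faceMap.{u} T σ) := by
  unfold faceMap
  infer_instance

lemma range_faceMap (T : Finset (Fin (p + 1))) {n : ℕ} (σ : Fin (n + 1) ≃o T) :
    Subcomplex.range (faceMap.{u} T σ) = face T := by
  simp only [faceMap, Subcomplex.range_comp, Subcomplex.range_eq_top, Subcomplex.image_top,
    Subfunctor.range_ι]

lemma faceMap_app_apply (T : Finset (Fin (p + 1))) {n d : ℕ} (σ : Fin (n + 1) ≃o T)
    (x : Δ[n] _⦋d⦌) (i : Fin (d + 1)) : (faceMap.{u} T σ).app _ x i = σ (x i) :=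
  rfl

lemma preimage_faceHorn_faceMap {T : Finset (Fin (p + 1))} {e : Fin (p + 1)} (he : e ∈ T)
    {n : ℕ} (σ : Fin (n + 2) ≃o T) :
    (faceHorn T e).preimage (faceMap.{u} T σ) = horn (n + 1) (σ.symm ⟨e, he⟩) := by
  ext ⟨m⟩ x
  induction m using SimplexCategory.rec with | _ d
  simp only [faceHorn, Subcomplex.preimage_obj, Subfunctor.iSup_obj, Set.mem_preimage,
    Set.mem_iUnion, mem_face_iff, faceMap_app_apply, exists_prop, mem_horn_iff_notMem_range,
    Finset.mem_erase, Set.mem_range, not_exists]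
  constructor
  · rintro ⟨j, ⟨hje, hjT⟩, hx⟩
    refine ⟨σ.symm ⟨j, hjT⟩, fun h => hje (by simpa using σ.symm.injective h),
      fun i hi => (hx i).1 (by simp [hi])⟩
  · rintro ⟨j, hje, hx⟩
    refine ⟨σ j, ⟨fun h => hje ?_, (σ j).2⟩,
      fun i => ⟨fun h => hx i (σ.injective (Subtype.ext h)), (σ _).2⟩⟩
    simp [← h]

lemma anodyneExtensions_homOfLE_faceHorn {T : Finset (Fin (p + 1))} {e : Fin (p + 1)}
    (he : e ∈ T) (hT : 2 ≤ T.card) :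
    anodyneExtensions (Subcomplex.homOfLE (faceHorn_le_face.{u} T e)) := by
  obtain ⟨n, hn⟩ : ∃ n, T.card = n + 2 := ⟨T.card - 2, by omega⟩
  let σ := T.orderIsoOfFin hn
  refine anodyneExtensions_homOfLE_of_preimage (faceMap T σ) _ (range_faceMap T σ).ge ?_
  refine anodyneExtensions_homOfLE_of_eq le_top _ (preimage_faceHorn_faceMap he σ).symm ?_
    ((anodyneExtensions_homOfLE_top_iff _).2 (anodyneExtensions.horn_ι _))
  rw [← range_faceMap T σ, Subcomplex.preimage_range]

def faceUnion (F : Finset (Finset (Fin (p + 1)))) : (Δ[p] : SSet.{u}).Subcomplex :=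
  ⨆ T ∈ F, face T

lemma faceUnion_le_iff {F : Finset (Finset (Fin (p + 1)))} {A : (Δ[p] : SSet.{u}).Subcomplex} :
    faceUnion F ≤ A ↔ ∀ T ∈ F, face T ≤ A :=
  iSup₂_le_iff

lemma face_le_faceUnion {F : Finset (Finset (Fin (p + 1)))} {T : Finset (Fin (p + 1))}
    (hT : T ∈ F) : face T ≤ faceUnion.{u} F :=
  le_iSup₂ (f := fun T (_ : T ∈ F) => face T) T hT

lemma faceUnion_insert (F : Finset (Finset (Fin (p + 1)))) (T : Finset (Fin (p + 1))) :
    faceUnion.{u} (insert T F) = faceUnion F ⊔ face T := by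
  rw [faceUnion, Finset.iSup_insert, sup_comm, faceUnion]

def uncoveredFaces (e : Fin (p + 1)) (F : Finset (Finset (Fin (p + 1)))) :
    Finset (Finset (Fin (p + 1))) :=
  {T | e ∈ T ∧ ∀ T' ∈ F, ¬ T ⊆ T'}

lemma mem_uncoveredFaces {e : Fin (p + 1)} {F : Finset (Finset (Fin (p + 1)))}
    {T : Finset (Fin (p + 1))} :
    T ∈ uncoveredFaces e F ↔ e ∈ T ∧ ∀ T' ∈ F, ¬ T ⊆ T' := by
  simp [uncoveredFaces]

lemma card_uncoveredFaces_insert_lt {e : Fin (p + 1)} {F : Finset (Finset (Fin (p + 1)))}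
    {T : Finset (Fin (p + 1))} (hT : T ∈ uncoveredFaces e F) :
    (uncoveredFaces e (insert T F)).card < (uncoveredFaces e F).card := by
  refine Finset.card_lt_card ((Finset.ssubset_iff_of_subset fun S hS => ?_).2 ⟨T, hT, ?_⟩)
  · rw [mem_uncoveredFaces] at hS ⊢
    exact ⟨hS.1, fun T' hT' => hS.2 T' (Finset.mem_insert_of_mem hT')⟩
  · rw [mem_uncoveredFaces]
    exact fun h => h.2 T (Finset.mem_insert_self T F) subset_rfl

lemma faceUnion_eq_top {e : Fin (p + 1)} {F : Finset (Finset (Fin (p + 1)))}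
    (h : uncoveredFaces e F = ∅) : faceUnion.{u} F = ⊤ := by
  have : Finset.univ ∉ uncoveredFaces e F := h ▸ Finset.notMem_empty _
  simp only [mem_uncoveredFaces, Finset.mem_univ, true_and, not_forall, not_not] at this
  obtain ⟨T, hT, hTuniv⟩ := this
  rw [_root_.eq_top_iff, ← face_univ]
  exact ((face_le_face_iff _ _).2 hTuniv).trans (face_le_faceUnion hT)

lemma faceUnion_inf_face {e : Fin (p + 1)} {F : Finset (Finset (Fin (p + 1)))}
    (he : ∀ T' ∈ F, e ∈ T') {T : Finset (Fin (p + 1))} (hT : ∀ T' ∈ F, ¬ T ⊆ T')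
    (hcov : ∀ j ∈ T.erase e, ∃ T' ∈ F, T.erase j ⊆ T') :
    faceUnion.{u} F ⊓ face T = faceHorn T e := by
  refine le_antisymm ?_ (le_inf ?_ (faceHorn_le_face T e))
  · simp only [faceUnion, Subfunctor.iSup_min, face_inter_face]
    refine iSup₂_le fun T' hT' => ?_
    obtain ⟨j, hjT, hjT'⟩ := Finset.not_subset.1 (hT T' hT')
    have hje : j ≠ e := fun h => hjT' (h ▸ he T' hT')
    refine ((face_le_face_iff _ _).2 fun i hi => ?_).trans
      (le_iSup₂ (f := fun j (_ : j ∈ T.erase e) => face (T.erase j)) j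
        (Finset.mem_erase.2 ⟨hje, hjT⟩))
    rw [Finset.inf_eq_inter, Finset.mem_inter] at hi
    exact Finset.mem_erase.2 ⟨fun h => hjT' (h ▸ hi.1), hi.2⟩
  · refine iSup₂_le fun j hj => ?_
    obtain ⟨T', hT', hsub⟩ := hcov j hj
    exact ((face_le_face_iff _ _).2 hsub).trans (face_le_faceUnion hT')

theorem anodyneExtensions_faceUnion_ι {e : Fin (p + 1)} (F : Finset (Finset (Fin (p + 1))))
    (hF : F.Nonempty) (he : ∀ T ∈ F, e ∈ T) : anodyneExtensions (faceUnion.{u} F).ι := by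
  rcases (uncoveredFaces e F).eq_empty_or_nonempty with h | h
  · rw [faceUnion_eq_top h]
    exact .of_isIso _
  obtain ⟨T, hT, hmin⟩ := Finset.exists_min_image _ Finset.card h
  obtain ⟨heT, hTF⟩ := mem_uncoveredFaces.1 hT
  have hcov (j) (hj : j ∈ T.erase e) : ∃ T' ∈ F, T.erase j ⊆ T' := by
    by_contra! hunc
    have := hmin _ (mem_uncoveredFaces.2
      ⟨Finset.mem_erase.2 ⟨(Finset.ne_of_mem_erase hj).symm, heT⟩, hunc⟩)
    exact (Finset.card_erase_lt_of_mem (Finset.mem_of_mem_erase hj)).not_ge this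
  have hcard : 2 ≤ T.card := by
    obtain ⟨T₀, hT₀⟩ := hF
    obtain ⟨j, hjT, hjT₀⟩ := Finset.not_subset.1 (hTF T₀ hT₀)
    exact Finset.one_lt_card.2 ⟨e, heT, j, hjT, fun h => hjT₀ (h ▸ he T₀ hT₀)⟩
  rw [← Subcomplex.homOfLE_ι (le_sup_left : faceUnion F ≤ faceUnion F ⊔ face T)]
  refine MorphismProperty.comp_mem _ _ _ (anodyneExtensions_homOfLE_sup ?_) ?_
  · exact anodyneExtensions_homOfLE_of_eq _ _ (faceUnion_inf_face he hTF hcov).symm rfl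
      (anodyneExtensions_homOfLE_faceHorn heT hcard)
  · rw [← faceUnion_insert]
    exact anodyneExtensions_faceUnion_ι (insert T F) (Finset.insert_nonempty T F)
      (Finset.forall_mem_insert _ _ _ |>.2 ⟨heT, he⟩)
termination_by (uncoveredFaces e F).card
decreasing_by exact card_uncoveredFaces_insert_lt hT

end stdSimplex

end SSet

end

lemma SSet.face_eq_stdSimplex_face {p : ℕ} (T : Finset (Fin (p + 1))) :
    SSet.face.{u} p ↑T = stdSimplex.face T := by
  ext ⟨m⟩ x
  induction m using SimplexCategory.rec with | _ d
  simp only [SSet.face, Set.range_subset_iff, SetLike.mem_coe, Set.mem_ofPred_eq,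
    stdSimplex.mem_face_iff]
  rfl

lemma SSet.iSup_face_eq_faceUnion {p : ℕ} (F : Finset (Finset (Fin (p + 1)))) :
    ⨆ T ∈ F, SSet.face.{u} p ↑T = stdSimplex.faceUnion F :=
  le_antisymm
    (iSup₂_le fun T hT => (face_eq_stdSimplex_face T).trans_le (stdSimplex.face_le_faceUnion hT))
    (stdSimplex.faceUnion_le_iff.2 fun T hT => (face_eq_stdSimplex_face T).symm.trans_le
      (le_iSup₂ (f := fun T (_ : T ∈ F) => SSet.face p ↑T) T hT))

/-- **Face completion.** Let `F` be an inhabited (finite, decidable) set of faces of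
`Δ[p]` which all contain a common vertex `e`. Then the inclusion `⋃ F ⟶ Δ[p]` has the
left lifting property with respect to all Kan fibrations. -/
theorem face_completion (p : ℕ) (e : Fin (p + 1)) (F : Finset (Finset (Fin (p + 1))))
    (hne : F.Nonempty) (he : ∀ T ∈ F, e ∈ T)
    {X Y : SSet} (g : X ⟶ Y) (hg : IsKanFibration g) :
    HasLiftingProperty
      (Subpresheaf.ssetι (⨆ T ∈ F, SSet.face p (T : Set (Fin (p + 1))))) g := by
  rw [SSet.iSup_face_eq_faceUnion]
  exact (SSet.stdSimplex.anodyneExtensions_faceUnion_ι F hne he).hasLiftingProperty hg
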